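/- Let L be a Banach lattice with order continuous norm, T a positive operator on L that is strictly positive together with its adjoint, and suppose T leaves a closed ideal J invariant, decomposing as an upper block-triangular operator [[T1, T2],[0, T4]] with respect to L = J ⊕ J^d. If T is idempotent, then T2 = 0, i.e., T = T1 ⊕ T4. -/

import Mathlib

/-!
Since `L` is complete with order continuous norm, the closed ideal `J` is a projection band:
`L = J ⊕ Jᵈ`, and the band projection `P` is positive (the `J`-component of `y ≥ 0` is
`sup {y ⊓ j | 0 ≤ j ∈ J}`). Let `T₂ = P T (1 - P)` be the off-diagonal block of `T`.
Idempotency of `T` and invariance of `J` give `T (T₂ T) = 0`; as `T₂ T ≥ 0` and `T` is strictly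
positive, `T₂ T = 0`. For every positive functional `φ`, `φ ∘ T₂` is then positive and vanishes
on the range of `T`, so it is zero by strict positivity of `T*`. Positive functionals detect the
positive cone (Hahn–Banach), hence `T₂ = 0`: `T` maps `Jᵈ` into `Jᵈ`.
-/

open Filter Topology

section Defs
variable {L : Type*} [NormedAddCommGroup L] [Lattice L] [HasSolidNorm L] [IsOrderedAddMonoid L] [NormedSpace ℝ L]

def IsOrderIdeal (J : Submodule ℝ L) : Prop :=
  ∀ x y : L, |x| ≤ |y| → y ∈ J → x ∈ J

def InvariantUnder (T : L →L[ℝ] L) (J : Submodule ℝ L) : Prop :=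
  ∀ x ∈ J, T x ∈ J

def PositiveOp (T : L →L[ℝ] L) : Prop := ∀ x : L, 0 ≤ x → 0 ≤ T x

def IdealReducible (F : Set (L →L[ℝ] L)) : Prop :=
  ∃ J : Submodule ℝ L, IsOrderIdeal J ∧ IsClosed (J : Set L) ∧ J ≠ ⊥ ∧ J ≠ ⊤ ∧
    ∀ T ∈ F, InvariantUnder T J

def ClosedIdealChain (C : Set (Submodule ℝ L)) : Prop :=
  IsChain (· ≤ ·) C ∧ ∀ J ∈ C, IsOrderIdeal J ∧ IsClosed (J : Set L)

def IdealTriangularizable (F : Set (L →L[ℝ] L)) : Prop :=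
  ∃ C : Set (Submodule ℝ L), ClosedIdealChain C ∧
    (∀ C' : Set (Submodule ℝ L), ClosedIdealChain C' → C ⊆ C' → C' = C) ∧
    ∀ J ∈ C, ∀ T ∈ F, InvariantUnder T J

def QuasiInterior (x : L) : Prop :=
  0 ≤ x ∧ Dense {y : L | ∃ lam : ℝ, 0 ≤ lam ∧ |y| ≤ lam • x}

def StrictlyPosFunctional (φ : L →L[ℝ] ℝ) : Prop :=
  (∀ x : L, 0 ≤ x → 0 ≤ φ x) ∧ ∀ x : L, 0 ≤ x → x ≠ 0 → 0 < φ x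

def StrictlyPosOp (T : L →L[ℝ] L) : Prop :=
  PositiveOp T ∧ ∀ x : L, T |x| = 0 → x = 0

def AdjointStrictlyPos (T : L →L[ℝ] L) : Prop :=
  ∀ ψ : L →L[ℝ] ℝ, (∀ x : L, 0 ≤ x → 0 ≤ ψ x) → ψ.comp T = 0 → ψ = 0

def IsLatAtom (a : L) : Prop :=
  0 ≤ a ∧ a ≠ 0 ∧ ∀ x : L, 0 ≤ x → x ≤ a → ∃ lam : ℝ, 0 ≤ lam ∧ x = lam • a

def Quasinilpotent (T : L →L[ℝ] L) : Prop :=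
  Tendsto (fun n : ℕ => ‖T ^ n‖ ^ ((1:ℝ) / n)) atTop (𝓝 0)

def PowerCompact (T : L →L[ℝ] L) : Prop :=
  ∃ k : ℕ, 0 < k ∧ IsCompactOperator (T ^ k : L →L[ℝ] L)

def OpLE (S T : L →L[ℝ] L) : Prop := ∀ x : L, 0 ≤ x → S x ≤ T x

def IsBand (B : Submodule ℝ L) : Prop :=
  IsOrderIdeal B ∧ ∀ A : Set L, A.Nonempty → A ⊆ B → ∀ x : L, IsLUB A x → x ∈ B

def IsBandProjection (P : L →L[ℝ] L) (B : Submodule ℝ L) : Prop :=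
  PositiveOp P ∧ P.comp P = P ∧ (∀ x : L, P x ∈ B) ∧ (∀ x ∈ B, P x = x) ∧
    ∀ x : L, ∀ b ∈ B, |x - P x| ⊓ |b| = 0

def IsAtomicBand (B : Submodule ℝ L) : Prop :=
  IsBand B ∧ (∀ a : L, IsLatAtom a → a ∈ B) ∧
    ∀ B' : Submodule ℝ L, IsBand B' → (∀ a : L, IsLatAtom a → a ∈ B') → B ≤ B'

def DedekindComplete (L : Type*) [NormedAddCommGroup L] [Lattice L] [HasSolidNorm L] [IsOrderedAddMonoid L] : Prop :=
  ∀ A : Set L, A.Nonempty → BddAbove A → ∃ x : L, IsLUB A x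

def OrderContinuousNorm (L : Type*) [NormedAddCommGroup L] [Lattice L] [HasSolidNorm L] [IsOrderedAddMonoid L] : Prop :=
  ∀ A : Set L, A.Nonempty → DirectedOn (· ≥ ·) A → IsGLB A 0 →
    ∀ ε : ℝ, 0 < ε → ∃ a ∈ A, ‖a‖ < ε

def MaxAtomFamily (𝒜 : Set L) : Prop :=
  (∀ a ∈ 𝒜, IsLatAtom a ∧ ‖a‖ = 1) ∧
  (∀ a ∈ 𝒜, ∀ b ∈ 𝒜, a ≠ b → a ⊓ b = 0) ∧
  ∀ c : L, IsLatAtom c → ∃ a ∈ 𝒜, ¬ (c ⊓ a = 0)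

def AtomicDiagOf (𝒜 : Set L) (Pa : L → (L →L[ℝ] L)) (T D : L →L[ℝ] L) : Prop :=
  (∀ F : Finset L, ↑F ⊆ 𝒜 → OpLE (∑ a ∈ F, (Pa a).comp (T.comp (Pa a))) D) ∧
  ∀ U : L →L[ℝ] L,
    (∀ F : Finset L, ↑F ⊆ 𝒜 → OpLE (∑ a ∈ F, (Pa a).comp (T.comp (Pa a))) U) → OpLE D U

def SchepSet (T : L →L[ℝ] L) : Set (L →L[ℝ] L) :=
  {S | ∃ (m : ℕ) (P : Fin m → (L →L[ℝ] L)) (B : Fin m → Submodule ℝ L),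
    (∀ i, IsBand (B i) ∧ IsBandProjection (P i) (B i)) ∧ (∑ i, P i = 1) ∧
    S = ∑ i, (P i).comp (T.comp (P i))}

def CentralPartOf (T PT : L →L[ℝ] L) : Prop :=
  PositiveOp PT ∧ (∀ S ∈ SchepSet T, OpLE PT S) ∧
    ∀ U : L →L[ℝ] L, PositiveOp U → (∀ S ∈ SchepSet T, OpLE U S) → OpLE U PT

end Defs

open Pointwise

section LatticeOrderedGroup

variable {α : Type*} [AddCommGroup α] [Lattice α] [IsOrderedAddMonoid α] {a b c : α}

theorem add_inf_le_inf_add_inf (ha : 0 ≤ a) (hb : 0 ≤ b) (hc : 0 ≤ c) :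
    (a + b) ⊓ c ≤ a ⊓ c + b ⊓ c := by
  rw [inf_add, add_inf b c a, add_inf b c c]
  exact le_inf (le_inf inf_le_left (inf_le_right.trans (le_add_of_nonneg_left ha)))
    (le_inf (inf_le_right.trans (le_add_of_nonneg_right hb))
      (inf_le_right.trans (le_add_of_nonneg_right hc)))

theorem inf_nsmul_eq_zero (ha : 0 ≤ a) (hb : 0 ≤ b) (hab : a ⊓ b = 0) (n : ℕ) :
    a ⊓ n • b = 0 := by
  induction n with
  | zero => simpa using ha
  | succ n ih =>
    refine le_antisymm ?_ (le_inf ha (nsmul_nonneg hb _))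
    calc a ⊓ (n + 1) • b = (n • b + b) ⊓ a := by rw [succ_nsmul, inf_comm]
      _ ≤ n • b ⊓ a + b ⊓ a := add_inf_le_inf_add_inf (nsmul_nonneg hb n) hb ha
      _ = 0 := by rw [inf_comm, ih, inf_comm, hab, add_zero]

theorem nonneg_of_nsmul_nonneg {n : ℕ} (hn : n ≠ 0) (h : 0 ≤ n • a) : 0 ≤ a := by
  have hle : a⁻ ≤ n • a⁺ := calc
    a⁻ ≤ n • a⁻ := le_self_nsmul (negPart_nonneg a) hn
    _ ≤ n • a⁺ := by rwa [← sub_nonneg, ← nsmul_sub, posPart_sub_negPart]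
  have hdisj : a⁻ ⊓ n • a⁺ = 0 := inf_nsmul_eq_zero (negPart_nonneg a) (posPart_nonneg a)
    (by rw [inf_comm, posPart_inf_negPart_eq_zero]) n
  rw [inf_eq_left.2 hle] at hdisj
  exact negPart_eq_zero.1 hdisj

theorem directedOn_upperBounds_sub {A : Set α} (hdir : DirectedOn (· ≤ ·) A) :
    DirectedOn (· ≥ ·) (upperBounds A - A) := by
  rintro _ ⟨b₁, hb₁, a₁, ha₁, rfl⟩ _ ⟨b₂, hb₂, a₂, ha₂, rfl⟩
  obtain ⟨a, ha, h₁, h₂⟩ := hdir a₁ ha₁ a₂ ha₂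
  exact ⟨b₁ ⊓ b₂ - a, ⟨b₁ ⊓ b₂, fun x hx => le_inf (hb₁ hx) (hb₂ hx), a, ha, rfl⟩,
    sub_le_sub inf_le_left h₁, sub_le_sub inf_le_right h₂⟩

end LatticeOrderedGroup

section NormedLattice

variable {L : Type*} [NormedAddCommGroup L] [Lattice L] [HasSolidNorm L] [IsOrderedAddMonoid L]

theorem norm_le_norm_of_nonneg_of_le {x y : L} (hx : 0 ≤ x) (hxy : x ≤ y) : ‖x‖ ≤ ‖y‖ :=
  norm_le_norm_of_abs_le_abs (by rwa [abs_of_nonneg hx, abs_of_nonneg (hx.trans hxy)])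

theorem exists_isLUB_of_tendsto_sub [CompleteSpace L] {A : Set L} {a b : ℕ → L}
    (ha : ∀ n, a n ∈ A) (hb : ∀ n, b n ∈ upperBounds A)
    (hab : Tendsto (fun n => b n - a n) atTop (𝓝 0)) : ∃ u, IsLUB A u ∧ u ∈ closure A := by
  have hdist : ∀ m n, dist (a m) (a n) ≤ ‖b m - a m‖ + ‖b n - a n‖ := by
    intro m n
    have hm : 0 ≤ b m - a m := sub_nonneg.2 (hb m (ha m))
    have hn : 0 ≤ b n - a n := sub_nonneg.2 (hb n (ha n))
    have habs : |a m - a n| ≤ (b m - a m) + (b n - a n) := abs_le'.2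
      ⟨le_add_of_nonneg_of_le hm (sub_le_sub_right (hb n (ha m)) _),
        neg_sub (a m) (a n) ▸ le_add_of_le_of_nonneg (sub_le_sub_right (hb m (ha n)) _) hn⟩
    rw [dist_eq_norm]
    exact (norm_le_norm_of_abs_le_abs (habs.trans (le_abs_self _))).trans (norm_add_le _ _)
  have hcauchy : CauchySeq a := by
    rw [cauchySeq_iff_tendsto_dist_atTop_0]
    refine squeeze_zero (fun _ => dist_nonneg) (fun p => hdist p.1 p.2) ?_
    rw [← prod_atTop_atTop_eq]
    simpa using (hab.norm.comp tendsto_fst).add (hab.norm.comp tendsto_snd)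
  obtain ⟨u, hu⟩ := cauchySeq_tendsto_of_complete hcauchy
  refine ⟨u, ⟨fun x hx => ?_, fun v hv => le_of_tendsto' hu fun n => hv (ha n)⟩,
    mem_closure_of_tendsto hu (Eventually.of_forall ha)⟩
  exact sub_nonpos.1 (le_of_tendsto_of_tendsto' (tendsto_const_nhds.sub hu) hab
    fun n => sub_le_sub_right (hb n hx) _)

variable [NormedSpace ℝ L]

theorem eq_zero_of_forall_nsmul_le {x y : L} (hx : 0 ≤ x) (h : ∀ n : ℕ, n • x ≤ y) : x = 0 := by
  by_contra hne
  have hpos : 0 < ‖x‖ := norm_pos_iff.2 hne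
  obtain ⟨n, hn⟩ := exists_nat_gt (‖y‖ / ‖x‖)
  have hle := norm_le_norm_of_nonneg_of_le (nsmul_nonneg hx n) (h n)
  rw [RCLike.norm_nsmul ℝ, nsmul_eq_mul] at hle
  rw [div_lt_iff₀ hpos] at hn
  linarith

theorem isGLB_upperBounds_sub {A : Set L} (hne : A.Nonempty) (hbdd : BddAbove A) :
    IsGLB (upperBounds A - A) 0 := by
  refine ⟨?_, fun c hc => ?_⟩
  · rintro _ ⟨b, hb, a, ha, rfl⟩
    exact sub_nonneg.2 (hb ha)
  obtain ⟨a₀, ha₀⟩ := hne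
  obtain ⟨b₀, hb₀⟩ := hbdd
  have hstep : ∀ b ∈ upperBounds A, b - c⁺ ∈ upperBounds A := by
    intro b hb a ha
    have hac : a + c ≤ b := le_sub_iff_add_le'.1 (hc ⟨b, hb, a, ha, rfl⟩)
    rw [le_sub_iff_add_le, posPart_def, add_sup, add_zero]
    exact sup_le hac (hb ha)
  have hiter : ∀ n : ℕ, b₀ - n • c⁺ ∈ upperBounds A := by
    intro n
    induction n with
    | zero => simpa using hb₀
    | succ n ih => rw [succ_nsmul, ← sub_sub]; exact hstep _ ih
  exact posPart_eq_zero.1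
    (eq_zero_of_forall_nsmul_le (posPart_nonneg c) fun n => le_sub_comm.1 (hiter n ha₀))

theorem OrderContinuousNorm.exists_isLUB [CompleteSpace L] (hoc : OrderContinuousNorm L)
    {A : Set L} (hne : A.Nonempty) (hdir : DirectedOn (· ≤ ·) A) (hbdd : BddAbove A) :
    ∃ u, IsLUB A u ∧ u ∈ closure A := by
  have hsmall := hoc _ (hbdd.sub hne) (directedOn_upperBounds_sub hdir)
    (isGLB_upperBounds_sub hne hbdd)
  choose d hd hdlt using fun n : ℕ => hsmall (1 / (n + 1)) Nat.one_div_pos_of_nat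
  choose b hb a ha hba using hd
  refine exists_isLUB_of_tendsto_sub ha hb
    (squeeze_zero_norm (fun n => (congrArg norm (hba n)).trans_le (hdlt n).le)
      tendsto_one_div_add_atTop_nhds_zero_nat)

instance HasSolidNorm.posSMulMono : PosSMulMono ℝ L := by
  refine PosSMulMono.of_smul_nonneg fun t ht x hx => ?_
  have hrat : ∀ m d : ℕ, 0 ≤ ((m : ℝ) / d) • x := by
    intro m d
    rcases eq_or_ne d 0 with rfl | hd
    · simp
    refine nonneg_of_nsmul_nonneg hd ?_
    rw [← Nat.cast_smul_eq_nsmul ℝ, smul_smul, mul_div_cancel₀ _ (Nat.cast_ne_zero.2 hd),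
      Nat.cast_smul_eq_nsmul]
    exact nsmul_nonneg hx m
  have hlim : Tendsto (fun d : ℕ => ((⌊t * d⌋₊ : ℝ) / d) • x) atTop (𝓝 (t • x)) :=
    ((tendsto_nat_floor_mul_div_atTop ht).comp tendsto_natCast_atTop_atTop).smul_const x
  exact isClosed_nonneg.mem_of_tendsto hlim (Eventually.of_forall fun d => hrat _ _)

theorem abs_smul_le (c : ℝ) (x : L) : |c • x| ≤ |c| • |x| := by
  wlog hc : 0 ≤ c generalizing c
  · simpa [neg_smul, abs_neg] using this (-c) (by linarith)
  rw [abs_of_nonneg hc]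
  exact abs_le'.2 ⟨smul_le_smul_of_nonneg_left (le_abs_self x) hc,
    by rw [← smul_neg]; exact smul_le_smul_of_nonneg_left (neg_le_abs x) hc⟩

theorem nonneg_of_forall_nonneg_functional {x : L}
    (h : ∀ φ : L →L[ℝ] ℝ, (∀ w, 0 ≤ w → 0 ≤ φ w) → 0 ≤ φ x) : 0 ≤ x := by
  by_contra hx
  obtain ⟨f, s, hfx, hf⟩ :=
    geometric_hahn_banach_point_closed (convex_Ici (0 : L)) isClosed_Ici hx
  have hs : s < 0 := by simpa using hf 0 le_rfl
  have hfpos : ∀ w, 0 ≤ w → 0 ≤ f w := by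
    intro w hw
    by_contra! hw'
    have := hf ((s / f w) • w) (smul_nonneg (div_nonneg_of_nonpos hs.le hw'.le) hw)
    rw [map_smul, smul_eq_mul, div_mul_cancel₀ _ hw'.ne] at this
    exact lt_irrefl _ this
  linarith [h f hfpos]

end NormedLattice

section ProjectionBand

variable {L : Type*} [NormedAddCommGroup L] [Lattice L] [HasSolidNorm L] [IsOrderedAddMonoid L]
  [NormedSpace ℝ L]

def disjointComplement (S : Set L) : Submodule ℝ L where
  carrier := {x | ∀ j ∈ S, |x| ⊓ |j| = 0}
  zero_mem' j _ := by rw [abs_zero]; exact inf_eq_left.2 (abs_nonneg j)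
  add_mem' {x y} hx hy j hj := le_antisymm
    (calc |x + y| ⊓ |j| ≤ (|x| + |y|) ⊓ |j| := inf_le_inf_right _ (abs_add_le x y)
      _ ≤ |x| ⊓ |j| + |y| ⊓ |j| :=
        add_inf_le_inf_add_inf (abs_nonneg x) (abs_nonneg y) (abs_nonneg j)
      _ = 0 := by rw [hx j hj, hy j hj, add_zero])
    (le_inf (abs_nonneg _) (abs_nonneg j))
  smul_mem' c x hx j hj := by
    obtain ⟨n, hn⟩ := exists_nat_ge |c|
    refine le_antisymm ?_ (le_inf (abs_nonneg _) (abs_nonneg j))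
    calc |c • x| ⊓ |j| ≤ (n • |x|) ⊓ |j| := by
          refine inf_le_inf_right _ ((abs_smul_le c x).trans ?_)
          rw [← Nat.cast_smul_eq_nsmul ℝ]
          exact smul_le_smul_of_nonneg_right hn (abs_nonneg x)
      _ = 0 := by
          rw [inf_comm]
          exact inf_nsmul_eq_zero (abs_nonneg j) (abs_nonneg x)
            (by rw [inf_comm]; exact hx j hj) n

theorem mem_disjointComplement {S : Set L} {x : L} :
    x ∈ disjointComplement S ↔ ∀ j ∈ S, |x| ⊓ |j| = 0 := Iff.rfl

theorem isClosed_disjointComplement (S : Set L) : IsClosed (disjointComplement S : Set L) := by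
  have hset : (disjointComplement S : Set L) = ⋂ j ∈ S, {x | |x| ⊓ |j| = 0} := by
    ext x
    simp [mem_disjointComplement]
  rw [hset]
  have habs : Continuous fun x : L => |x| := continuous_id.sup continuous_neg
  exact isClosed_biInter fun j _ => isClosed_eq (habs.inf continuous_const) continuous_const

variable [CompleteSpace L] {J : Submodule ℝ L}

theorem exists_sub_mem_disjointComplement (hoc : OrderContinuousNorm L) (hJ : IsOrderIdeal J)
    (hJc : IsClosed (J : Set L)) {y : L} (hy : 0 ≤ y) :
    ∃ u ∈ J, 0 ≤ u ∧ u ≤ y ∧ y - u ∈ disjointComplement J := by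
  set A := {w | ∃ j ∈ J, 0 ≤ j ∧ y ⊓ j = w}
  have h0 : (0 : L) ∈ A := ⟨0, J.zero_mem, le_rfl, inf_eq_right.2 hy⟩
  have hdir : DirectedOn (· ≤ ·) A := by
    rintro _ ⟨j₁, hj₁, hj₁0, rfl⟩ _ ⟨j₂, hj₂, hj₂0, rfl⟩
    exact ⟨y ⊓ (j₁ + j₂), ⟨_, J.add_mem hj₁ hj₂, add_nonneg hj₁0 hj₂0, rfl⟩,
      inf_le_inf_left _ (le_add_of_nonneg_right hj₂0),
      inf_le_inf_left _ (le_add_of_nonneg_left hj₁0)⟩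
  have hyA : y ∈ upperBounds A := by
    rintro _ ⟨j, -, -, rfl⟩
    exact inf_le_left
  obtain ⟨u, hu, hucl⟩ := hoc.exists_isLUB ⟨0, h0⟩ hdir ⟨y, hyA⟩
  have hAJ : A ⊆ J := by
    rintro _ ⟨j, hj, hj0, rfl⟩
    refine hJ _ j ?_ hj
    rw [abs_of_nonneg (le_inf hy hj0), abs_of_nonneg hj0]
    exact inf_le_right
  have huJ : u ∈ J := hJc.closure_subset_iff.2 hAJ hucl
  have hyu : 0 ≤ y - u := sub_nonneg.2 (hu.2 hyA)
  refine ⟨u, huJ, hu.1 h0, hu.2 hyA, fun j hj => ?_⟩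
  -- `u + c` is again of the form `y ⊓ j'` with `j' ∈ J`, so maximality of `u` forces `c = 0`
  set c := (y - u) ⊓ |j|
  have hc0 : 0 ≤ c := le_inf hyu (abs_nonneg j)
  have hcJ : c ∈ J := hJ c j (by rw [abs_of_nonneg hc0]; exact inf_le_right) hj
  have hmem : u + c ∈ A := ⟨u + c, J.add_mem huJ hcJ, add_nonneg (hu.1 h0) hc0,
    inf_eq_right.2 (le_sub_iff_add_le'.1 inf_le_left)⟩
  rw [abs_of_nonneg hyu]
  exact le_antisymm (by simpa using hu.1 hmem) hc0

theorem isCompl_disjointComplement (hoc : OrderContinuousNorm L) (hJ : IsOrderIdeal J)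
    (hJc : IsClosed (J : Set L)) : IsCompl J (disjointComplement J) := by
  refine ⟨Submodule.disjoint_def.2 fun x hxJ hxd => ?_, codisjoint_iff.2 (eq_top_iff.2 ?_)⟩
  · have habs : |x| = 0 := by simpa using hxd x hxJ
    rw [← norm_eq_zero, ← norm_abs_eq_norm, habs, norm_zero]
  have hpos : ∀ z : L, 0 ≤ z → z ∈ J ⊔ disjointComplement J := fun z hz => by
    obtain ⟨u, huJ, -, -, hd⟩ := exists_sub_mem_disjointComplement hoc hJ hJc hz
    simpa using Submodule.add_mem_sup huJ hd
  intro y _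
  rw [← posPart_sub_negPart y]
  exact sub_mem (hpos _ (posPart_nonneg y)) (hpos _ (negPart_nonneg y))

variable (hoc : OrderContinuousNorm L) (hJ : IsOrderIdeal J) (hJc : IsClosed (J : Set L))

noncomputable def bandProjection : L →L[ℝ] L :=
  J.projectionL (disjointComplement J) <|
    Submodule.IsCompl.isTopCompl_of_isClosed (isCompl_disjointComplement hoc hJ hJc) hJc
      (isClosed_disjointComplement (J : Set L))

theorem bandProjection_apply_mem (x : L) : bandProjection hoc hJ hJc x ∈ J :=
  Submodule.projectionL_apply_mem _ x

theorem bandProjection_apply_of_mem {x : L} (hx : x ∈ J) : bandProjection hoc hJ hJc x = x :=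
  Submodule.projectionL_apply_left _ ⟨x, hx⟩

theorem bandProjection_eq_zero_iff {x : L} :
    bandProjection hoc hJ hJc x = 0 ↔ x ∈ disjointComplement J :=
  Submodule.projectionL_apply_eq_zero_iff _

theorem bandProjection_apply_mem_Icc {y : L} (hy : 0 ≤ y) :
    bandProjection hoc hJ hJc y ∈ Set.Icc 0 y := by
  obtain ⟨u, huJ, hu0, huy, hd⟩ := exists_sub_mem_disjointComplement hoc hJ hJc hy
  have hPy : bandProjection hoc hJ hJc y = u := by
    rw [← add_sub_cancel u y, map_add, bandProjection_apply_of_mem hoc hJ hJc huJ,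
      (bandProjection_eq_zero_iff hoc hJ hJc).2 hd, add_zero]
  exact hPy ▸ ⟨hu0, huy⟩

theorem positiveOp_bandProjection : PositiveOp (bandProjection hoc hJ hJc) :=
  fun _ hy => (bandProjection_apply_mem_Icc hoc hJ hJc hy).1

theorem positiveOp_one_sub_bandProjection : PositiveOp (1 - bandProjection hoc hJ hJc) :=
  fun _ hy => sub_nonneg.2 (bandProjection_apply_mem_Icc hoc hJ hJc hy).2

end ProjectionBand

theorem IsIdempotentElem.mul_mul_mul_one_sub_mul_eq_zero {R : Type*} [Ring R] {t p : R}
    (ht : IsIdempotentElem t) (hp : p * t * p = t * p) : t * (p * t * (1 - p) * t) = 0 := by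
  calc t * (p * t * (1 - p) * t) = t * p * (t * t) - t * (p * t * p) * t := by noncomm_ring
    _ = 0 := by rw [ht.eq, hp, ← mul_assoc, ht.eq, sub_self]

section PositiveOperators

variable {L : Type*} [NormedAddCommGroup L] [Lattice L] [NormedSpace ℝ L] {S T : L →L[ℝ] L}

theorem PositiveOp.mul (hS : PositiveOp S) (hT : PositiveOp T) : PositiveOp (S * T) :=
  fun x hx => hS _ (hT x hx)

variable [IsOrderedAddMonoid L]

theorem ContinuousLinearMap.eq_zero_of_forall_nonneg {M : Type*} [AddCommGroup M] [Module ℝ M]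
    [TopologicalSpace M] {S : L →L[ℝ] M} (h : ∀ x, 0 ≤ x → S x = 0) : S = 0 := by
  ext x
  rw [← posPart_sub_negPart x, map_sub, h _ (posPart_nonneg x), h _ (negPart_nonneg x),
    sub_zero, zero_apply]

theorem StrictlyPosOp.eq_zero_of_mul_eq_zero (hT : StrictlyPosOp T) (hS : PositiveOp S)
    (h : T * S = 0) : S = 0 :=
  ContinuousLinearMap.eq_zero_of_forall_nonneg fun x hx =>
    hT.2 _ (by rw [abs_of_nonneg (hS x hx)]; simpa using DFunLike.congr_fun h x)

theorem AdjointStrictlyPos.eq_zero_of_mul_eq_zero [HasSolidNorm L] (hT : AdjointStrictlyPos T)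
    (hS : PositiveOp S) (h : S * T = 0) : S = 0 := by
  have hφS : ∀ φ : L →L[ℝ] ℝ, (∀ w, 0 ≤ w → 0 ≤ φ w) → φ.comp S = 0 := fun φ hφ =>
    hT _ (fun w hw => hφ _ (hS w hw))
      (by rw [ContinuousLinearMap.comp_assoc, ← ContinuousLinearMap.mul_def, h,
        ContinuousLinearMap.comp_zero])
  refine ContinuousLinearMap.eq_zero_of_forall_nonneg fun x hx => le_antisymm ?_ (hS x hx)
  refine neg_nonneg.1 (nonneg_of_forall_nonneg_functional fun φ hφ => ?_)
  simpa using (DFunLike.congr_fun (hφS φ hφ) x).le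

end PositiveOperators

theorem stmt8 {L : Type*} [NormedAddCommGroup L] [Lattice L] [HasSolidNorm L] [IsOrderedAddMonoid L] [NormedSpace ℝ L]
    [CompleteSpace L] (hoc : OrderContinuousNorm L)
    (T : L →L[ℝ] L) (hT : StrictlyPosOp T) (hT' : AdjointStrictlyPos T)
    (J : Submodule ℝ L) (hJ : IsOrderIdeal J) (hJc : IsClosed (J : Set L))
    (hinv : InvariantUnder T J) (hidem : T.comp T = T) :
    ∀ x : L, (∀ j ∈ J, |x| ⊓ |j| = 0) → ∀ j ∈ J, |T x| ⊓ |j| = 0 := by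
  set P := bandProjection hoc hJ hJc
  -- the off-diagonal block `T₂` of `T` with respect to `L = J ⊕ Jᵈ`
  set R := P * T * (1 - P)
  have hPTP : P * T * P = T * P := by
    ext y
    exact bandProjection_apply_of_mem hoc hJ hJc (hinv _ (bandProjection_apply_mem hoc hJ hJc y))
  have hRpos : PositiveOp R :=
    ((positiveOp_bandProjection hoc hJ hJc).mul hT.1).mul
      (positiveOp_one_sub_bandProjection hoc hJ hJc)
  have hRT : R * T = 0 := hT.eq_zero_of_mul_eq_zero (hRpos.mul hT.1)
    (IsIdempotentElem.mul_mul_mul_one_sub_mul_eq_zero hidem hPTP)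
  have hR : R = 0 := hT'.eq_zero_of_mul_eq_zero hRpos hRT
  intro x hx
  have hPx : P x = 0 := (bandProjection_eq_zero_iff hoc hJ hJc).2 hx
  have hPTx : P (T x) = 0 := by simpa [R, hPx] using DFunLike.congr_fun hR x
  exact (bandProjection_eq_zero_iff hoc hJ hJc).1 hPTx
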